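/- Fix λ > 0 and define T(z, β) = η_{λ‖z−β‖₂}(z) ∈ ℝᵐ for (z, β) ∈ ℝᵐ × ℝᵐ, where the soft-thresholding function η_t(x) = sign(x)·max(|x| − t, 0) is applied componentwise. Then T is Lipschitz continuous jointly in (z, β): for all (z₁, β₁), (z₂, β₂) ∈ ℝᵐ × ℝᵐ, ‖T(z₁, β₁) − T(z₂, β₂)‖₂ ≤ (2 + 2λ)√m · ‖(z₁, β₁) − (z₂, β₂)‖₂, where the norm on ℝᵐ × ℝᵐ is the Euclidean norm of the concatenated vector. -/

import Mathlib

open scoped BigOperators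

/-- Euclidean norm of a vector in `ℝᵐ`. -/
noncomputable def norm2 {m : ℕ} (v : Fin m → ℝ) : ℝ := Real.sqrt (∑ i, (v i) ^ 2)

/-- Soft-thresholding with threshold `t`: `η_t(x) = sign(x)·max(|x| − t, 0)`. -/
noncomputable def soft (t x : ℝ) : ℝ := Real.sign x * max (|x| - t) 0

/-!
Soft-thresholding `η_t x = x - clamp_{[-t, t]} x` is 1-Lipschitz in `x` for `t ≥ 0` and
1-Lipschitz in `t`. The threshold `λ‖z - β‖` moves by at most `λ(‖Δz‖ + ‖Δβ‖)`, so each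
coordinate moves by at most `(1 + λ)(‖Δz‖ + ‖Δβ‖) ≤ (2 + 2λ)‖(Δz, Δβ)‖`, and a vector of `ℝᵐ`
with coordinates bounded by `C` has norm at most `√m C`.
-/

section SoftThreshold

variable {s t x y : ℝ}

lemma soft_eq_sub_clamp (ht : 0 ≤ t) (x : ℝ) : soft t x = x - max (min x t) (-t) := by
  unfold soft
  rcases lt_trichotomy x 0 with hx | rfl | hx
  · rw [Real.sign_of_neg hx, abs_of_neg hx]
    simp only [max_def, min_def]; split_ifs <;> linarith
  · simp [min_eq_left ht, max_eq_left (neg_nonpos.mpr ht)]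
  · rw [Real.sign_of_pos hx, abs_of_pos hx]
    simp only [max_def, min_def]; split_ifs <;> linarith

lemma abs_soft_sub_soft_le_abs_sub (ht : 0 ≤ t) : |soft t x - soft t y| ≤ |x - y| := by
  rw [soft_eq_sub_clamp ht, soft_eq_sub_clamp ht, abs_sub_le_iff]
  rcases abs_cases (x - y) with ⟨h, _⟩ | ⟨h, _⟩ <;> rw [h] <;> constructor <;>
    · simp only [max_def, min_def]; split_ifs <;> linarith

lemma abs_sign_le_one (x : ℝ) : |Real.sign x| ≤ 1 := by
  rcases Real.sign_apply_eq x with h | h | h <;> simp [h]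

lemma abs_soft_sub_soft_threshold_le (s t x : ℝ) : |soft s x - soft t x| ≤ |s - t| :=
  calc |soft s x - soft t x|
      = |Real.sign x| * |max (|x| - s) 0 - max (|x| - t) 0| := by
        rw [soft, soft, ← mul_sub, abs_mul]
    _ ≤ 1 * |(|x| - s) - (|x| - t)| :=
        mul_le_mul (abs_sign_le_one x) (abs_max_sub_max_le_abs _ _ _) (abs_nonneg _) zero_le_one
    _ = |s - t| := by rw [one_mul, sub_sub_sub_cancel_left, abs_sub_comm]

lemma abs_soft_sub_soft_le (hs : 0 ≤ s) : |soft s x - soft t y| ≤ |x - y| + |s - t| :=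
  calc |soft s x - soft t y| ≤ |soft s x - soft s y| + |soft s y - soft t y| := abs_sub_le _ _ _
    _ ≤ |x - y| + |s - t| :=
        add_le_add (abs_soft_sub_soft_le_abs_sub hs) (abs_soft_sub_soft_threshold_le s t y)

end SoftThreshold

section Norm2

variable {m : ℕ}

lemma norm2_eq_norm_toLp (v : Fin m → ℝ) :
    norm2 v = ‖(WithLp.toLp 2 v : EuclideanSpace ℝ (Fin m))‖ := by
  simp only [EuclideanSpace.norm_eq, norm2, Real.norm_eq_abs, sq_abs]

lemma norm2_nonneg (v : Fin m → ℝ) : 0 ≤ norm2 v := Real.sqrt_nonneg _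

lemma norm2_sub_le (u v : Fin m → ℝ) : norm2 (u - v) ≤ norm2 u + norm2 v := by
  simpa only [norm2_eq_norm_toLp, WithLp.toLp_sub] using norm_sub_le _ _

lemma abs_norm2_sub_norm2_le (u v : Fin m → ℝ) : |norm2 u - norm2 v| ≤ norm2 (u - v) := by
  simpa only [norm2_eq_norm_toLp, WithLp.toLp_sub] using abs_norm_sub_norm_le _ _

lemma abs_apply_le_norm2 (v : Fin m → ℝ) (i : Fin m) : |v i| ≤ norm2 v :=
  Real.abs_le_sqrt (Finset.single_le_sum (fun j _ => sq_nonneg (v j)) (Finset.mem_univ i))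

lemma norm2_le_sqrt_mul_of_abs_le {v : Fin m → ℝ} {C : ℝ} (hC : 0 ≤ C) (hv : ∀ i, |v i| ≤ C) :
    norm2 v ≤ √m * C :=
  calc norm2 v ≤ √(∑ _i : Fin m, C ^ 2) :=
        Real.sqrt_le_sqrt <| Finset.sum_le_sum fun i _ =>
          sq_le_sq' (abs_le.mp (hv i)).1 (abs_le.mp (hv i)).2
    _ = √m * C := by simp [Real.sqrt_mul, Real.sqrt_sq hC]

end Norm2

lemma add_le_two_mul_sqrt_sq_add_sq (a b : ℝ) : a + b ≤ 2 * √(a ^ 2 + b ^ 2) := by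
  have ha : |a| ≤ √(a ^ 2 + b ^ 2) := Real.abs_le_sqrt (by nlinarith)
  have hb : |b| ≤ √(a ^ 2 + b ^ 2) := Real.abs_le_sqrt (by nlinarith)
  linarith [le_abs_self a, le_abs_self b]

/-- For `λ > 0`, the map `(z, β) ↦ η_{λ‖z−β‖₂}(z)` is jointly Lipschitz with
constant `(2 + 2λ)√m`, where the norm on `ℝᵐ × ℝᵐ` is the Euclidean norm of
the concatenated vector. -/
theorem joint_lipschitz {m : ℕ} (lam : ℝ) (hlam : 0 < lam) :
    ∀ z₁ β₁ z₂ β₂ : Fin m → ℝ,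
      norm2 ((fun i => soft (lam * norm2 (z₁ - β₁)) (z₁ i)) -
              (fun i => soft (lam * norm2 (z₂ - β₂)) (z₂ i))) ≤
        (2 + 2 * lam) * Real.sqrt m *
          Real.sqrt ((norm2 (z₁ - z₂)) ^ 2 + (norm2 (β₁ - β₂)) ^ 2) := by
  intro z₁ β₁ z₂ β₂
  set a := norm2 (z₁ - z₂)
  set b := norm2 (β₁ - β₂)
  have hthreshold : |lam * norm2 (z₁ - β₁) - lam * norm2 (z₂ - β₂)| ≤ lam * (a + b) := by
    rw [← mul_sub, abs_mul, abs_of_pos hlam]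
    gcongr
    calc _ ≤ norm2 ((z₁ - β₁) - (z₂ - β₂)) := abs_norm2_sub_norm2_le _ _
      _ = norm2 ((z₁ - z₂) - (β₁ - β₂)) := by rw [sub_sub_sub_comm]
      _ ≤ a + b := norm2_sub_le _ _
  have hcoord : ∀ i, |soft (lam * norm2 (z₁ - β₁)) (z₁ i) - soft (lam * norm2 (z₂ - β₂)) (z₂ i)|
      ≤ (2 + 2 * lam) * √(a ^ 2 + b ^ 2) := fun i =>
    calc _ ≤ |z₁ i - z₂ i| + lam * (a + b) :=
          (abs_soft_sub_soft_le (mul_nonneg hlam.le (norm2_nonneg _))).trans (by gcongr)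
      _ ≤ a + lam * (a + b) := by
          gcongr; exact abs_apply_le_norm2 (z₁ - z₂) i
      _ ≤ (1 + lam) * (a + b) := by linarith [norm2_nonneg (β₁ - β₂)]
      _ ≤ (1 + lam) * (2 * √(a ^ 2 + b ^ 2)) := by gcongr; exact add_le_two_mul_sqrt_sq_add_sq a b
      _ = (2 + 2 * lam) * √(a ^ 2 + b ^ 2) := by ring
  exact (norm2_le_sqrt_mul_of_abs_le (by positivity) hcoord).trans_eq (by ring)
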